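/- Let C be a self-orthogonal right R-module and n ≥ 0. If N is a right R-module with Ext^i_R(C, N) = 0 for all i ≥ 1, and there exists an exact sequence 0 → N → C⁰ → C¹ → ··· → Cⁿ → 0 with each C^i ∈ add(C), then N ∈ add(C). That is, the intersection of the category of modules admitting a length-n add(C)-coresolution with C^⊥ equals add(C). -/

import Mathlib

/-!
STATEMENT 3: Let C be a self-orthogonal right R-module (right R-modules are modeled
as `Rᵐᵒᵖ`-modules) and n ≥ 0.  If N satisfies Ext^i_R(C, N) = 0 for all i ≥ 1 and
admits an exact sequence 0 → N → C⁰ → ⋯ → Cⁿ → 0 with each Cⁱ ∈ add(C), then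
N ∈ add(C).
Encoding: `D 0 = N`, `D 1, …, D (n+1)` are `C⁰, …, Cⁿ`; the maps are
`d i : D i ⟶ D (i+1)`; values of `D`, `d` at indices `> n+1` are irrelevant.
-/

open CategoryTheory Opposite

/-- `extM A i X Y` is the Ext group `Ext^i_A(X, Y)` in the category of `A`-modules. -/
noncomputable def extM (A : Type) [Ring A] (i : ℕ) (X Y : ModuleCat.{0} A) : ModuleCat.{0} ℤ :=
  ((Ext ℤ (ModuleCat.{0} A) i).obj (op X)).obj Y

/-- `N ∈ add(C)`: `N` is a direct summand of a finite direct sum of copies of `C`. -/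
def memAdd (A : Type) [Ring A] (C : Type) [AddCommGroup C] [Module A C]
    (N : ModuleCat.{0} A) : Prop :=
  ∃ (k : ℕ) (s : N →ₗ[A] (Fin k → C)) (r : (Fin k → C) →ₗ[A] N),
    r ∘ₗ s = LinearMap.id

/-!
`Ext^{i+1}(C, Y) = 0` is read off a fixed projective resolution `P` of `C`: every `(i+1)`-cocycle
`P_{i+1} → Y` is a coboundary. Cut the coresolution into short exact sequences
`0 → Kᵢ → Cⁱ → Kᵢ₊₁ → 0` with `K₀ ≅ N` and `Kₙ ≅ Cⁿ`. Self-orthogonality gives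
`add(C) ⊆ C^⊥`, and `C^⊥` is closed under cokernels of monomorphisms, so every `Kᵢ` lies in
`C^⊥`. Going back down, `Ext¹(C, Kᵢ) = 0` makes `Hom(C, Cⁱ) → Hom(C, Kᵢ₊₁)` surjective, so
once `Kᵢ₊₁ ∈ add(C)` the sequence splits and `Kᵢ` is a direct summand of `Cⁱ ∈ add(C)`.
-/

universe u v

namespace CategoryTheory.ProjectiveResolution

variable {𝒞 : Type*} [Category 𝒞] [Abelian 𝒞] {X : 𝒞} (P : ProjectiveResolution X)

def ExtSuccVanishes (Y : 𝒞) (i : ℕ) : Prop :=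
  ∀ α : P.complex.X (i + 1) ⟶ Y, P.complex.d (i + 2) (i + 1) ≫ α = 0 →
    ∃ σ : P.complex.X i ⟶ Y, P.complex.d (i + 1) i ≫ σ = α

theorem subsingleton_ext_succ_iff {R : Type*} [Ring R] [Linear R 𝒞] [EnoughProjectives 𝒞]
    (Y : 𝒞) (i : ℕ) :
    Subsingleton (((Ext R 𝒞 (i + 1)).obj (op X)).obj Y) ↔ P.ExtSuccVanishes Y i := by
  rw [(P.isoExt (i + 1) Y).toLinearEquiv.toEquiv.subsingleton_congr,
    ← ModuleCat.isZero_iff_subsingleton, ← HomologicalComplex.exactAt_iff_isZero_homology,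
    HomologicalComplex.exactAt_iff' _ i (i + 1) (i + 2) (by simp) (by simp),
    ShortComplex.moduleCat_exact_iff]
  rfl

variable {P}

theorem ExtSuccVanishes.of_retract {Y Z : 𝒞} (h : Retract Y Z) {i : ℕ}
    (hZ : P.ExtSuccVanishes Z i) : P.ExtSuccVanishes Y i := by
  intro α hα
  obtain ⟨σ, hσ⟩ := hZ (α ≫ h.i) (by rw [← Category.assoc, hα, Limits.zero_comp])
  exact ⟨σ ≫ h.r, by rw [← Category.assoc, hσ, Category.assoc, h.retract, Category.comp_id]⟩

theorem ExtSuccVanishes.pi {A : Type u} [Ring A] {X : ModuleCat.{v} A}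
    {P : ProjectiveResolution X} {ι : Type v} {M : ι → Type v} [∀ j, AddCommGroup (M j)]
    [∀ j, Module A (M j)] {i : ℕ} (h : ∀ j, P.ExtSuccVanishes (ModuleCat.of A (M j)) i) :
    P.ExtSuccVanishes (ModuleCat.of A (∀ j, M j)) i := by
  intro α hα
  choose σ hσ using fun j ↦
    h j (α ≫ ModuleCat.ofHom (LinearMap.proj j)) (by rw [← Category.assoc, hα, Limits.zero_comp])
  refine ⟨ModuleCat.ofHom (LinearMap.pi fun j ↦ (σ j).hom), ?_⟩
  ext x : 2
  funext j
  exact ConcreteCategory.congr_hom (hσ j) x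

/-- Any lift of `α` through `S.g` becomes a cocycle after subtracting an `S.X₁`-valued
coboundary. -/
theorem exists_lift_cocycle {S : ShortComplex 𝒞} (hS : S.ShortExact) {i : ℕ}
    (h₁ : P.ExtSuccVanishes S.X₁ i) (α : P.complex.X i ⟶ S.X₃)
    (hα : P.complex.d (i + 1) i ≫ α = 0) :
    ∃ β : P.complex.X i ⟶ S.X₂, β ≫ S.g = α ∧ P.complex.d (i + 1) i ≫ β = 0 := by
  have := hS.mono_f
  have := hS.epi_g
  set β₀ := Projective.factorThru α S.g
  have hβ₀ : β₀ ≫ S.g = α := Projective.factorThru_comp α S.g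
  set γ := hS.exact.lift (P.complex.d (i + 1) i ≫ β₀) (by rw [Category.assoc, hβ₀, hα])
  have hγ : γ ≫ S.f = P.complex.d (i + 1) i ≫ β₀ := hS.exact.lift_f _ _
  have hγ_cocycle : P.complex.d (i + 2) (i + 1) ≫ γ = 0 := by
    rw [← cancel_mono S.f, Category.assoc, hγ, HomologicalComplex.d_comp_d_assoc,
      Limits.zero_comp, Limits.zero_comp]
  obtain ⟨σ, hσ⟩ := h₁ γ hγ_cocycle
  refine ⟨β₀ - σ ≫ S.f, ?_, ?_⟩
  · rw [Preadditive.sub_comp, hβ₀, Category.assoc, S.zero, Limits.comp_zero, sub_zero]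
  · rw [Preadditive.comp_sub, ← Category.assoc, hσ, hγ, sub_self]

theorem ExtSuccVanishes.of_shortExact {S : ShortComplex 𝒞} (hS : S.ShortExact) {i : ℕ}
    (h₁ : P.ExtSuccVanishes S.X₁ (i + 1)) (h₂ : P.ExtSuccVanishes S.X₂ i) :
    P.ExtSuccVanishes S.X₃ i := by
  intro α hα
  obtain ⟨β, rfl, hβ⟩ := exists_lift_cocycle hS h₁ α hα
  obtain ⟨τ, rfl⟩ := h₂ β hβ
  exact ⟨τ ≫ S.g, (Category.assoc _ _ _).symm⟩

theorem exists_lift_of_extSuccVanishes_zero {S : ShortComplex 𝒞} (hS : S.ShortExact)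
    (h₁ : P.ExtSuccVanishes S.X₁ 0) (φ : X ⟶ S.X₃) : ∃ ψ : X ⟶ S.X₂, ψ ≫ S.g = φ := by
  let e := HomologicalComplex.singleObjXSelf (ComplexShape.down ℕ) 0 X
  obtain ⟨β, hβφ, hβ⟩ := exists_lift_cocycle hS h₁ (P.π.f 0 ≫ e.hom ≫ φ)
    (by rw [P.complex_d_comp_π_f_zero_assoc, Limits.zero_comp])
  refine ⟨e.inv ≫ P.exact₀.desc β hβ, ?_⟩
  rw [← cancel_epi (P.π.f 0 ≫ e.hom), Category.assoc, Category.assoc, e.hom_inv_id_assoc]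
  have hdesc : P.π.f 0 ≫ P.exact₀.desc β hβ = β := P.exact₀.g_desc β hβ
  rw [reassoc_of% hdesc, hβφ, Category.assoc]

end CategoryTheory.ProjectiveResolution

theorem LinearMap.exists_comp_eq_of_pi {ι : Type*} [Fintype ι] [DecidableEq ι] {R : Type*}
    [Semiring R] {M : ι → Type*} [∀ j, AddCommMonoid (M j)] [∀ j, Module R (M j)]
    {N K : Type*} [AddCommMonoid N] [Module R N] [AddCommMonoid K] [Module R K]
    {g : N →ₗ[R] K} (hg : ∀ j (φ : M j →ₗ[R] K), ∃ ψ, g ∘ₗ ψ = φ) (φ : (∀ j, M j) →ₗ[R] K) :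
    ∃ ψ, g ∘ₗ ψ = φ := by
  choose ψ hψ using fun j ↦ hg j (φ ∘ₗ LinearMap.single R M j)
  refine ⟨LinearMap.lsum R M ℕ ψ, LinearMap.pi_ext' fun j ↦ ?_⟩
  ext x
  simp only [LinearMap.comp_apply, LinearMap.coe_single, LinearMap.lsum_piSingle]
  exact LinearMap.congr_fun (hψ j) x

section RangeShortComplex

variable {A : Type*} [Ring A] {M₀ M₁ M₂ : ModuleCat A} (f : M₀ ⟶ M₁) (g : M₁ ⟶ M₂)
  (hfg : Function.Exact f g)

abbrev rangeShortComplex : ShortComplex (ModuleCat A) :=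
  ModuleCat.shortComplexOfCompEqZero (LinearMap.range f.hom).subtype g.hom.rangeRestrict <| by
    ext ⟨_, x, rfl⟩
    exact hfg.apply_apply_eq_zero x

theorem rangeShortComplex_shortExact : (rangeShortComplex f g hfg).ShortExact := by
  refine ModuleCat.shortComplex_shortExact _ (fun (y : M₁) ↦ ?_) Subtype.val_injective
    (LinearMap.surjective_rangeRestrict _)
  change g.hom.rangeRestrict y = 0 ↔ y ∈ Set.range ((↑) : LinearMap.range f.hom → M₁)
  rw [Subtype.range_coe, ← Subtype.coe_inj]
  exact hfg y

end RangeShortComplex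

section AddC

open ProjectiveResolution

variable {A : Type} [Ring A] {C : Type} [AddCommGroup C] [Module A C]

theorem memAdd_of_retract {Y Z : ModuleCat.{0} A} (h : Retract Y Z) (hZ : memAdd A C Z) :
    memAdd A C Y := by
  obtain ⟨k, s, r, hrs⟩ := hZ
  refine ⟨k, s ∘ₗ h.i.hom, h.r.hom ∘ₗ r, ?_⟩
  rw [LinearMap.comp_assoc, ← LinearMap.comp_assoc _ s, hrs, LinearMap.id_comp,
    ← ModuleCat.hom_comp, h.retract, ModuleCat.hom_id]

theorem memAdd_of_linearEquiv {Y Z : ModuleCat.{0} A} (e : Y ≃ₗ[A] Z) (hZ : memAdd A C Z) :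
    memAdd A C Y :=
  memAdd_of_retract e.toModuleIso.retract hZ

theorem exists_retract_of_memAdd {Y : ModuleCat.{0} A} (hY : memAdd A C Y) :
    ∃ k : ℕ, Nonempty (Retract Y (ModuleCat.of A (Fin k → C))) := by
  obtain ⟨k, s, r, hrs⟩ := hY
  exact ⟨k, ⟨⟨ModuleCat.ofHom s, ModuleCat.ofHom r, ModuleCat.hom_ext hrs⟩⟩⟩

theorem CategoryTheory.ProjectiveResolution.ExtSuccVanishes.of_memAdd {X : ModuleCat.{0} A}
    {P : ProjectiveResolution X} {Y : ModuleCat.{0} A} (hY : memAdd A C Y) {i : ℕ}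
    (hC : P.ExtSuccVanishes (ModuleCat.of A C) i) : P.ExtSuccVanishes Y i := by
  obtain ⟨k, ⟨h⟩⟩ := exists_retract_of_memAdd hY
  exact .of_retract h (.pi fun _ ↦ hC)

theorem memAdd_of_shortExact {S : ShortComplex (ModuleCat.{0} A)} (hS : S.ShortExact)
    (h₂ : memAdd A C S.X₂) (h₃ : memAdd A C S.X₃)
    (hlift : ∀ φ : ModuleCat.of A C ⟶ S.X₃, ∃ ψ, ψ ≫ S.g = φ) : memAdd A C S.X₁ := by
  obtain ⟨k, s, r, hrs⟩ := h₃
  obtain ⟨ρ, hρ⟩ := LinearMap.exists_comp_eq_of_pi (M := fun _ : Fin k ↦ C) (g := S.g.hom)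
    (fun _ φ ↦ (hlift (ModuleCat.ofHom φ)).elim fun ψ hψ ↦ ⟨ψ.hom, congrArg ModuleCat.Hom.hom hψ⟩)
    r
  have hsection : ModuleCat.ofHom (ρ ∘ₗ s) ≫ S.g = 𝟙 S.X₃ := by
    ext x
    change (S.g.hom ∘ₗ ρ) (s x) = x
    rw [hρ, ← LinearMap.comp_apply, hrs, LinearMap.id_apply]
  let σ := ShortComplex.Splitting.ofExactOfSection S hS.exact _ hsection hS.mono_f
  exact memAdd_of_retract ⟨S.f, σ.r, σ.f_r⟩ h₂

theorem memAdd_of_coresolution (P : ProjectiveResolution (ModuleCat.of A C))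
    (hC : ∀ i, P.ExtSuccVanishes (ModuleCat.of A C) i) {n : ℕ} {D : ℕ → ModuleCat.{0} A}
    (d : ∀ i, D i ⟶ D (i + 1)) (hinj : Function.Injective (d 0))
    (hsurj : Function.Surjective (d n)) (hexact : ∀ i < n, Function.Exact (d i) (d (i + 1)))
    (hCi : ∀ i ≤ n, memAdd A C (D (i + 1))) (hN : ∀ i, P.ExtSuccVanishes (D 0) i) :
    memAdd A C (D 0) := by
  let K (i : ℕ) : ModuleCat.{0} A := ModuleCat.of A (LinearMap.range (d i).hom)
  have eK₀ : D 0 ≃ₗ[A] K 0 := LinearEquiv.ofInjective (d 0).hom hinj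
  have eKn : K n ≃ₗ[A] D (n + 1) := LinearEquiv.ofTop _ (LinearMap.range_eq_top.mpr hsurj)
  have hseq (i : ℕ) (hi : i < n) := rangeShortComplex_shortExact _ _ (hexact i hi)
  have hperp : ∀ i ≤ n, ∀ j, P.ExtSuccVanishes (K i) j := by
    intro i
    induction i with
    | zero => exact fun _ j ↦ .of_retract eK₀.symm.toModuleIso.retract (hN j)
    | succ i ih =>
      intro hi j
      exact .of_shortExact (hseq i hi) (ih (Nat.le_of_succ_le hi) (j + 1))
        (.of_memAdd (hCi i (Nat.le_of_succ_le hi)) (hC j))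
  have hadd : ∀ i ≤ n, memAdd A C (K i) := by
    intro i hi
    induction hi using Nat.decreasingInduction with
    | self => exact memAdd_of_linearEquiv eKn (hCi n le_rfl)
    | of_succ i hi ih =>
      exact memAdd_of_shortExact (hseq i hi) (hCi i hi.le) ih
        (exists_lift_of_extSuccVanishes_zero (hseq i hi) (hperp i hi.le 0))
  exact memAdd_of_linearEquiv eK₀ (hadd 0 (Nat.zero_le n))

end AddC

theorem stmt3 (R : Type) [Ring R] (C : Type) [AddCommGroup C] [Module Rᵐᵒᵖ C] (n : ℕ)
    (hso : ∀ i, 1 ≤ i →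
      Subsingleton (extM Rᵐᵒᵖ i (ModuleCat.of Rᵐᵒᵖ C) (ModuleCat.of Rᵐᵒᵖ C)))
    (D : ℕ → ModuleCat.{0} Rᵐᵒᵖ) (d : ∀ i, D i ⟶ D (i + 1))
    (hinj : Function.Injective (d 0))
    (hsurj : Function.Surjective (d n))
    (hexact : ∀ i < n, Function.Exact (d i) (d (i + 1)))
    (hCi : ∀ i ≤ n, memAdd Rᵐᵒᵖ C (D (i + 1)))
    (hN : ∀ i, 1 ≤ i → Subsingleton (extM Rᵐᵒᵖ i (ModuleCat.of Rᵐᵒᵖ C) (D 0))) :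
    memAdd Rᵐᵒᵖ C (D 0) := by
  let P := ProjectiveResolution.of (ModuleCat.of Rᵐᵒᵖ C)
  have hperp (Y : ModuleCat.{0} Rᵐᵒᵖ)
      (hY : ∀ i, 1 ≤ i → Subsingleton (extM Rᵐᵒᵖ i (ModuleCat.of Rᵐᵒᵖ C) Y)) (i : ℕ) :
      P.ExtSuccVanishes Y i :=
    (P.subsingleton_ext_succ_iff Y i).mp (hY (i + 1) (Nat.le_add_left 1 i))
  exact memAdd_of_coresolution P (hperp _ hso) d hinj hsurj hexact hCi (hperp _ hN)
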